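/- arXiv:1303.6642 — 5 statements merged into one kernel-verified Lean document; each statement's English description precedes it below -/
import Mathlib

section
/- Let I ⊆ S = K[x_1, ..., x_n] be a monomial ideal and let a ∈ ℕ^n be a vector such that every minimal monomial generator of I divides x^a. Then applying generalized Alexander duality with respect to a twice recovers I: (I^[a])^[a] = I. -/
/-
For `c ≤ a` componentwise, `x^c ∈ I^[a]` holds exactly when `x^(a - c) ∉ I`: the component
`(x_i^{a_i + 1 - b_i} : b_i ≥ 1)` of the dual misses `x^c` iff `b ≤ a - c`. Applying this twice
(the minimal generators of `I^[a]` also divide `x^a`) shows that `(I^[a])^[a]` and `I` contain the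
same monomials `x^c` with `c ≤ a`; membership of any other monomial only depends on its
truncation `c ⊓ a`. Both ideals are spanned by their monomials, so they coincide.
-/

open MvPolynomial

/-- `I` is a monomial ideal: it is generated by monomials. -/
def IsMonomialIdeal {n : ℕ} {K : Type*} [Field K] (I : Ideal (MvPolynomial (Fin n) K)) : Prop :=
  ∃ B : Set (Fin n →₀ ℕ), I = Ideal.span ((fun b => monomial b (1 : K)) '' B)

/-- `x^b` is a minimal monomial generator of the monomial ideal `I`:
`x^b ∈ I` and no proper monomial divisor of `x^b` lies in `I`. -/
def IsMinGen {n : ℕ} {K : Type*} [Field K] (I : Ideal (MvPolynomial (Fin n) K))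
    (b : Fin n →₀ ℕ) : Prop :=
  monomial b (1 : K) ∈ I ∧ ∀ b' : Fin n →₀ ℕ, b' ≤ b → b' ≠ b → monomial b' (1 : K) ∉ I

/-- The generalized Alexander dual `I^[a]` of a monomial ideal `I` with respect to the
vector `a`: the intersection, over the minimal monomial generators `x^b` of `I`, of the
irreducible ideals `(x_i^{a_i + 1 - b_i} : b_i ≥ 1)`. -/
noncomputable def alexDual {n : ℕ} {K : Type*} [Field K] (I : Ideal (MvPolynomial (Fin n) K))
    (a : Fin n → ℕ) : Ideal (MvPolynomial (Fin n) K) :=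
  ⨅ b ∈ {b : Fin n →₀ ℕ | IsMinGen I b},
    Ideal.span {p | ∃ i : Fin n, 1 ≤ b i ∧ p = X i ^ (a i + 1 - b i)}

namespace MvPolynomial

variable {σ R : Type*} [CommSemiring R]

/-- These are exactly the ideals spanned by monomials. -/
def IsMonomialClosed (T : Ideal (MvPolynomial σ R)) : Prop :=
  ∀ p ∈ T, ∀ c ∈ p.support, monomial c (1 : R) ∈ T

theorem monomial_one_mem_of_le {T : Ideal (MvPolynomial σ R)} {b c : σ →₀ ℕ} (hbc : b ≤ c)
    (hb : monomial b (1 : R) ∈ T) : monomial c (1 : R) ∈ T :=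
  Ideal.mem_of_dvd _ (monomial_dvd_monomial.mpr ⟨Or.inr hbc, one_dvd _⟩) hb

theorem mem_of_forall_monomial_one_mem {T : Ideal (MvPolynomial σ R)} {p : MvPolynomial σ R}
    (hp : ∀ c ∈ p.support, monomial c (1 : R) ∈ T) : p ∈ T := by
  rw [p.as_sum]
  refine Ideal.sum_mem _ fun c hc => ?_
  rw [← mul_one (coeff c p), ← smul_eq_mul, ← smul_monomial]
  exact Submodule.smul_of_tower_mem _ _ (hp c hc)

theorem IsMonomialClosed.ext {T T' : Ideal (MvPolynomial σ R)} (hT : IsMonomialClosed T)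
    (hT' : IsMonomialClosed T') (h : ∀ c, monomial c (1 : R) ∈ T ↔ monomial c (1 : R) ∈ T') :
    T = T' :=
  Ideal.ext fun _ =>
    ⟨fun hp => mem_of_forall_monomial_one_mem fun c hc => (h c).mp (hT _ hp c hc),
      fun hp => mem_of_forall_monomial_one_mem fun c hc => (h c).mpr (hT' _ hp c hc)⟩

theorem isMonomialClosed_iInf {ι : Sort*} {T : ι → Ideal (MvPolynomial σ R)}
    (hT : ∀ i, IsMonomialClosed (T i)) : IsMonomialClosed (⨅ i, T i) := by
  intro p hp c hc
  rw [Ideal.mem_iInf] at hp ⊢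
  exact fun i => hT i p (hp i) c hc

theorem monomial_one_mem_span_monomial_image_iff [Nontrivial R] {B : Set (σ →₀ ℕ)} {c : σ →₀ ℕ} :
    monomial c (1 : R) ∈ Ideal.span ((fun b => monomial b (1 : R)) '' B) ↔ ∃ b ∈ B, b ≤ c := by
  classical
  rw [mem_ideal_span_monomial_image, support_monomial, if_neg one_ne_zero]
  simp

theorem isMonomialClosed_span_monomial_image [Nontrivial R] (B : Set (σ →₀ ℕ)) :
    IsMonomialClosed (Ideal.span ((fun b => monomial b (1 : R)) '' B)) := fun _ hp c hc =>
  monomial_one_mem_span_monomial_image_iff.mpr (mem_ideal_span_monomial_image.mp hp c hc)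

end MvPolynomial

section AlexanderDuality

variable {n : ℕ} {K : Type*} [Field K]

theorem IsMonomialIdeal.isMonomialClosed {I : Ideal (MvPolynomial (Fin n) K)}
    (hI : IsMonomialIdeal I) : IsMonomialClosed I := by
  obtain ⟨B, rfl⟩ := hI
  exact isMonomialClosed_span_monomial_image B

theorem monomial_mem_iff_exists_isMinGen (I : Ideal (MvPolynomial (Fin n) K)) (c : Fin n →₀ ℕ) :
    monomial c (1 : K) ∈ I ↔ ∃ b, IsMinGen I b ∧ b ≤ c := by
  refine ⟨fun hc => ?_, fun ⟨b, hb, hbc⟩ => monomial_one_mem_of_le hbc hb.1⟩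
  obtain ⟨b, ⟨hbI, hbc⟩, hmin⟩ :=
    Finsupp.lt_wf (Fin n) |>.has_min {b | monomial b (1 : K) ∈ I ∧ b ≤ c} ⟨c, hc, le_rfl⟩
  exact ⟨b, ⟨hbI, fun b' hb' hne hb'I =>
    hmin b' ⟨hb'I, hb'.trans hbc⟩ (lt_of_le_of_ne hb' hne)⟩, hbc⟩

theorem setOf_X_pow_eq_image_monomial (b : Fin n →₀ ℕ) (a : Fin n → ℕ) :
    {p : MvPolynomial (Fin n) K | ∃ i, 1 ≤ b i ∧ p = X i ^ (a i + 1 - b i)} =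
      (fun d => monomial d (1 : K)) ''
        {d | ∃ i, 1 ≤ b i ∧ d = Finsupp.single i (a i + 1 - b i)} := by
  ext p
  simp only [Set.mem_ofPred_eq, Set.mem_image]
  constructor
  · rintro ⟨i, hi, rfl⟩
    exact ⟨_, ⟨i, hi, rfl⟩, X_pow_eq_monomial.symm⟩
  · rintro ⟨d, ⟨i, hi, rfl⟩, rfl⟩
    exact ⟨i, hi, X_pow_eq_monomial.symm⟩

theorem isMonomialClosed_alexDual (T : Ideal (MvPolynomial (Fin n) K)) (a : Fin n → ℕ) :
    IsMonomialClosed (alexDual T a) :=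
  isMonomialClosed_iInf fun b => isMonomialClosed_iInf fun _ => by
    rw [setOf_X_pow_eq_image_monomial]
    exact isMonomialClosed_span_monomial_image _

theorem monomial_mem_alexDual_iff (T : Ideal (MvPolynomial (Fin n) K)) (a : Fin n → ℕ)
    (c : Fin n →₀ ℕ) :
    monomial c (1 : K) ∈ alexDual T a ↔
      ∀ b, IsMinGen T b → ∃ i, 1 ≤ b i ∧ a i + 1 - b i ≤ c i := by
  simp only [alexDual, Ideal.mem_iInf, Set.mem_ofPred_eq, setOf_X_pow_eq_image_monomial,
    monomial_one_mem_span_monomial_image_iff]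
  refine forall₂_congr fun b _ => ⟨?_, ?_⟩
  · rintro ⟨d, ⟨i, hi, rfl⟩, hd⟩
    exact ⟨i, hi, Finsupp.single_le_iff.mp hd⟩
  · rintro ⟨i, hi, h⟩
    exact ⟨_, ⟨i, hi, rfl⟩, Finsupp.single_le_iff.mpr h⟩

theorem monomial_inf_mem_alexDual_iff (T : Ideal (MvPolynomial (Fin n) K)) (a : Fin n → ℕ)
    (c : Fin n →₀ ℕ) :
    monomial (c ⊓ Finsupp.equivFunOnFinite.symm a) (1 : K) ∈ alexDual T a ↔
      monomial c (1 : K) ∈ alexDual T a := by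
  simp only [monomial_mem_alexDual_iff, Finsupp.inf_apply, Finsupp.coe_equivFunOnFinite_symm]
  refine forall₂_congr fun b _ => exists_congr fun i => ?_
  omega

theorem monomial_inf_mem_iff {I : Ideal (MvPolynomial (Fin n) K)} {a : Fin n → ℕ}
    (hdiv : ∀ b, IsMinGen I b → ∀ i, b i ≤ a i) (c : Fin n →₀ ℕ) :
    monomial (c ⊓ Finsupp.equivFunOnFinite.symm a) (1 : K) ∈ I ↔ monomial c (1 : K) ∈ I := by
  simp only [monomial_mem_iff_exists_isMinGen, le_inf_iff]
  exact exists_congr fun b => and_congr_right fun hb => and_iff_left (hdiv b hb)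

theorem isMinGen_alexDual_le {T : Ideal (MvPolynomial (Fin n) K)} {a : Fin n → ℕ}
    {b : Fin n →₀ ℕ} (hb : IsMinGen (alexDual T a) b) (i : Fin n) : b i ≤ a i := by
  by_contra hlt
  refine hb.2 _ inf_le_left (fun h => hlt ?_) ((monomial_inf_mem_alexDual_iff T a b).mpr hb.1)
  have := DFunLike.congr_fun h i
  simp only [Finsupp.inf_apply, Finsupp.coe_equivFunOnFinite_symm] at this
  omega

theorem monomial_mem_alexDual_iff_not_mem {T : Ideal (MvPolynomial (Fin n) K)} {a : Fin n → ℕ}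
    (hdiv : ∀ b, IsMinGen T b → ∀ i, b i ≤ a i) {c d : Fin n →₀ ℕ}
    (hcd : ∀ i, c i + d i = a i) :
    monomial c (1 : K) ∈ alexDual T a ↔ monomial d (1 : K) ∉ T := by
  rw [monomial_mem_alexDual_iff]
  simp only [monomial_mem_iff_exists_isMinGen, not_exists, not_and, Finsupp.le_def, not_forall,
    not_le]
  refine forall₂_congr fun b hb => exists_congr fun i => ?_
  have := hcd i
  have := hdiv b hb i
  omega

theorem monomial_mem_alexDual_alexDual_iff {T : Ideal (MvPolynomial (Fin n) K)} {a : Fin n → ℕ}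
    (hdiv : ∀ b, IsMinGen T b → ∀ i, b i ≤ a i) {c : Fin n →₀ ℕ} (hca : ∀ i, c i ≤ a i) :
    monomial c (1 : K) ∈ alexDual (alexDual T a) a ↔ monomial c (1 : K) ∈ T := by
  set d : Fin n →₀ ℕ := Finsupp.equivFunOnFinite.symm fun i => a i - c i
  have hcd : ∀ i, c i + d i = a i := fun i => by
    simp only [d, Finsupp.coe_equivFunOnFinite_symm]
    have := hca i
    omega
  rw [monomial_mem_alexDual_iff_not_mem (fun _ => isMinGen_alexDual_le) hcd,
    monomial_mem_alexDual_iff_not_mem hdiv fun i => (add_comm _ _).trans (hcd i), not_not]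

end AlexanderDuality

/-- If `I` is a monomial ideal all of whose minimal monomial generators
divide `x^a`, then taking the generalized Alexander dual with respect to `a` twice
recovers `I`: `(I^[a])^[a] = I`. -/
theorem alexDual_alexDual {n : ℕ} {K : Type*} [Field K]
    (I : Ideal (MvPolynomial (Fin n) K)) (a : Fin n → ℕ)
    (hmono : IsMonomialIdeal I)
    (hdiv : ∀ b : Fin n →₀ ℕ, IsMinGen I b → ∀ i, b i ≤ a i) :
    alexDual (alexDual I a) a = I := by
  refine (isMonomialClosed_alexDual _ a).ext hmono.isMonomialClosed fun c => ?_
  rw [← monomial_inf_mem_alexDual_iff, ← monomial_inf_mem_iff hdiv]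
  exact monomial_mem_alexDual_alexDual_iff hdiv fun i => by
    simp only [Finsupp.inf_apply, Finsupp.coe_equivFunOnFinite_symm]
    exact min_le_right _ _
end

section
/- Every monomial ideal I ⊆ S = K[x_1, ..., x_n] has a unique irredundant irreducible decomposition: there is a unique irredundant collection of irreducible monomial ideals Q_1, ..., Q_r with I = Q_1 ∩ ... ∩ Q_r. -/
open MvPolynomial

/-- `Q` is an irreducible monomial ideal: `Q = (x_i^{e_i} : i ∈ T)` for some set of
variables `T` and positive exponents `e_i` for `i ∈ T` (variables with exponent `∞`
are omitted, i.e. do not belong to `T`). -/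
def IsIrreducibleMonomialIdeal {n : ℕ} {K : Type*} [Field K]
    (Q : Ideal (MvPolynomial (Fin n) K)) : Prop :=
  ∃ (T : Finset (Fin n)) (e : Fin n → ℕ), (∀ i ∈ T, 1 ≤ e i) ∧
    Q = Ideal.span {p | ∃ i ∈ T, p = X i ^ e i}

/-!
Monomial ideals correspond to upper sets of exponent vectors: such an ideal contains a polynomial
exactly when it contains every monomial of its support. Intersections of ideals then correspond to
intersections of upper sets, so monomial ideals form a distributive lattice, which by Dickson's
lemma has no infinite strictly ascending chains. In such a lattice every element is a finite
irredundant meet of meet-irreducibles, and the decomposition is unique because meet-irreducibles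
are prime: each component of one decomposition contains a component of the other and vice versa.
Finally, an upper set is meet-irreducible exactly when it is generated by pure powers `x_i ^ e_i`,
since every exponent vector is the join of the pure powers below it.
-/

theorem Finset.sup_erase_id_of_le {α : Type*} [SemilatticeSup α] [OrderBot α] [DecidableEq α]
    {s : Finset α} {b c : α} (hc : c ∈ s) (hbc : b ≤ c) (hne : b ≠ c) :
    (s.erase b).sup id = s.sup id := by
  refine le_antisymm (Finset.sup_mono (Finset.erase_subset b s)) (Finset.sup_le fun x hx => ?_)
  obtain rfl | hxb := eq_or_ne x b
  · exact hbc.trans (Finset.le_sup (f := id) (Finset.mem_erase.2 ⟨hne.symm, hc⟩))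
  · exact Finset.le_sup (f := id) (Finset.mem_erase.2 ⟨hxb, hx⟩)

section DistribLattice

variable {α : Type*} [DistribLattice α] [OrderBot α] [DecidableEq α]

def IsIrredundantSupIrredDecomposition (a : α) (s : Finset α) : Prop :=
  (∀ b ∈ s, SupIrred b) ∧ s.sup id = a ∧ ∀ b ∈ s, (s.erase b).sup id ≠ a

theorem IsIrredundantSupIrredDecomposition.subset {a : α} {s t : Finset α}
    (hs : IsIrredundantSupIrredDecomposition a s) (ht : IsIrredundantSupIrredDecomposition a t) :
    s ⊆ t := by
  obtain ⟨hs_supIrred, hs_sup, hs_irredundant⟩ := hs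
  obtain ⟨ht_supIrred, ht_sup, -⟩ := ht
  intro b hb
  obtain ⟨c, hc, hbc⟩ := (supPrime_iff_supIrred.2 (hs_supIrred b hb)).le_finset_sup.1
    (ht_sup ▸ hs_sup ▸ Finset.le_sup (f := id) hb)
  obtain ⟨b', hb', hcb'⟩ := (supPrime_iff_supIrred.2 (ht_supIrred c hc)).le_finset_sup.1
    (hs_sup ▸ ht_sup ▸ Finset.le_sup (f := id) hc)
  obtain rfl : b = b' := by
    by_contra hne
    exact hs_irredundant b hb ((Finset.sup_erase_id_of_le hb' (hbc.trans hcb') hne).trans hs_sup)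
  rwa [le_antisymm hbc hcb']

theorem exists_isIrredundantSupIrredDecomposition [WellFoundedLT α] (a : α) :
    ∃ s, IsIrredundantSupIrredDecomposition a s := by
  obtain ⟨s, hs⟩ := exists_minimal_of_wellFoundedLT
    (fun s : Finset α => (∀ b ∈ s, SupIrred b) ∧ s.sup id = a)
    (let ⟨s, hsup, hirr⟩ := exists_supIrred_decomposition a; ⟨s, fun _ hb => hirr hb, hsup⟩)
  refine ⟨s, hs.prop.1, hs.prop.2, fun b hb hb_red => ?_⟩
  have hs_erase : (∀ c ∈ s.erase b, SupIrred c) ∧ (s.erase b).sup id = a :=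
    ⟨fun c hc => hs.prop.1 c (Finset.mem_of_mem_erase hc), hb_red⟩
  exact (Finset.erase_ssubset hb).not_ge (hs.le_of_le hs_erase (Finset.erase_subset b s))

theorem existsUnique_isIrredundantSupIrredDecomposition [WellFoundedLT α] (a : α) :
    ∃! s, IsIrredundantSupIrredDecomposition a s :=
  let ⟨s, hs⟩ := exists_isIrredundantSupIrredDecomposition a
  ⟨s, hs, fun _ ht => (ht.subset hs).antisymm (hs.subset ht)⟩

end DistribLattice

instance UpperSet.wellFoundedLT {α : Type*} [Preorder α] [WellQuasiOrderedLE α] :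
    WellFoundedLT (UpperSet α) := by
  rw [WellFoundedLT, isWellFounded_iff, RelEmbedding.wellFounded_iff_isEmpty]
  refine ⟨fun f => ?_⟩
  have hf_anti : ∀ {m k : ℕ}, m ≤ k → f k ≤ f m := fun {m k} hmk =>
    hmk.eq_or_lt.elim (fun h => h ▸ le_rfl) fun h => (f.map_rel_iff.2 h).le
  have hx : ∀ n, ∃ x ∈ f (n + 1), x ∉ f n := fun n => by
    simpa [← UpperSet.coe_subset_coe, Set.not_subset] using
      (f.map_rel_iff.2 n.lt_succ_self).not_ge
  choose x hx_mem hx_nmem using hx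
  obtain ⟨m, k, hmk, hle⟩ := wellQuasiOrdered_le x
  exact hx_nmem k ((f k).upper hle (hf_anti hmk (hx_mem m)))

section Finsupp

variable {σ : Type*}

theorem mem_upperClosure_image_single {T : Set σ} {e : σ → ℕ} {a : σ →₀ ℕ} :
    a ∈ upperClosure ((fun i => Finsupp.single i (e i)) '' T) ↔ ∃ i ∈ T, e i ≤ a i := by
  simp [mem_upperClosure, Finsupp.single_le_iff]

theorem supPrime_upperClosure_image_single {T : Set σ} {e : σ → ℕ} (he : ∀ i ∈ T, e i ≠ 0) :
    SupPrime (upperClosure ((fun i => Finsupp.single i (e i)) '' T)) := by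
  refine ⟨fun hmin => ?_, fun V W hVW => ?_⟩
  · obtain ⟨i, hi, h0⟩ := mem_upperClosure_image_single.1 (hmin.eq_bot ▸ UpperSet.mem_bot (a := 0))
    exact he i hi (Nat.le_zero.1 h0)
  · by_contra! h
    simp only [← UpperSet.coe_subset_coe, Set.not_subset] at h
    obtain ⟨⟨x, hxV, hxU⟩, ⟨y, hyW, hyU⟩⟩ := h
    have hxy : x ⊔ y ∈ V ⊔ W := ⟨V.upper le_sup_left hxV, W.upper le_sup_right hyW⟩
    obtain ⟨i, hi, hle⟩ := mem_upperClosure_image_single.1 (hVW hxy)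
    rcases le_sup_iff.1 hle with h | h
    · exact hxU (mem_upperClosure_image_single.2 ⟨i, hi, h⟩)
    · exact hyU (mem_upperClosure_image_single.2 ⟨i, hi, h⟩)

theorem SupPrime.exists_eq_upperClosure_image_single {U : UpperSet (σ →₀ ℕ)} (hU : SupPrime U) :
    ∃ (T : Set σ) (e : σ → ℕ), (∀ i ∈ T, e i ≠ 0) ∧
      U = upperClosure ((fun i => Finsupp.single i (e i)) '' T) := by
  have zero_notMem : (0 : σ →₀ ℕ) ∉ U := fun h0 =>
    hU.ne_bot <| le_bot_iff.1 <|
      (UpperSet.le_Ici.2 h0).trans_eq (by rw [← bot_eq_zero, UpperSet.Ici_bot])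
  have single_mem : ∀ a ∈ U, ∃ i, Finsupp.single i (a i) ∈ U := by
    intro a ha
    -- `a` is the join of the pure powers `single i (a i)`, so primality puts one of them in `U`.
    have : U ≤ a.support.sup fun i => UpperSet.Ici (Finsupp.single i (a i)) := by
      rw [← UpperSet.coe_subset_coe]
      intro x hx
      rw [SetLike.mem_coe, Finset.sup_eq_iSup, UpperSet.mem_iSup₂_iff] at hx
      refine U.upper (Finsupp.le_def.2 fun i => ?_) ha
      by_cases hi : i ∈ a.support
      · exact Finsupp.single_le_iff.1 (UpperSet.mem_Ici_iff.1 (hx i hi))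
      · simp [Finsupp.notMem_support_iff.1 hi]
    obtain ⟨i, -, hi⟩ := hU.le_finset_sup.1 this
    exact ⟨i, UpperSet.le_Ici.1 hi⟩
  refine ⟨{i | ∃ k, Finsupp.single i k ∈ U}, fun i => sInf {k | Finsupp.single i k ∈ U}, ?_, ?_⟩
  · intro i hi h0
    have h : Finsupp.single i (sInf {k | Finsupp.single i k ∈ U}) ∈ U := Nat.sInf_mem hi
    dsimp only at h0
    rw [h0, Finsupp.single_zero] at h
    exact zero_notMem h
  · ext a
    simp only [SetLike.mem_coe, mem_upperClosure_image_single]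
    constructor
    · intro ha
      obtain ⟨i, hi⟩ := single_mem a ha
      exact ⟨i, ⟨_, hi⟩, Nat.sInf_le hi⟩
    · rintro ⟨i, hi, hle⟩
      exact U.upper (Finsupp.single_le_iff.2 hle) (Nat.sInf_mem hi)

end Finsupp

namespace MvPolynomial

variable {σ R : Type*} [CommSemiring R]

-- `UpperSet` is ordered by reverse inclusion, so `monomialIdeal` sends `⊔` to `⊓` and `⊥` to `⊤`.
noncomputable def monomialIdeal (R : Type*) [CommSemiring R] (U : UpperSet (σ →₀ ℕ)) :
    Ideal (MvPolynomial σ R) :=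
  Ideal.span ((fun a => monomial a 1) '' U)

theorem mem_monomialIdeal {U : UpperSet (σ →₀ ℕ)} {p : MvPolynomial σ R} :
    p ∈ monomialIdeal R U ↔ ∀ m ∈ p.support, m ∈ U :=
  mem_ideal_span_monomial_image.trans <| forall₂_congr fun m _ =>
    ⟨fun ⟨_, hb, hbm⟩ => U.upper hbm hb, fun hm => ⟨m, hm, le_rfl⟩⟩

theorem monomialIdeal_upperClosure (B : Set (σ →₀ ℕ)) :
    monomialIdeal R (upperClosure B) = Ideal.span ((fun b => monomial b 1) '' B) := by
  ext p
  simp only [mem_monomialIdeal, mem_ideal_span_monomial_image, mem_upperClosure]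

theorem monomialIdeal_sup (U V : UpperSet (σ →₀ ℕ)) :
    monomialIdeal R (U ⊔ V) = monomialIdeal R U ⊓ monomialIdeal R V := by
  ext p
  simp only [mem_monomialIdeal, Ideal.mem_inf, UpperSet.mem_sup_iff, forall_and]

theorem monomialIdeal_bot : monomialIdeal R (⊥ : UpperSet (σ →₀ ℕ)) = ⊤ :=
  eq_top_iff.2 fun _ _ => mem_monomialIdeal.2 fun _ _ => UpperSet.mem_bot

theorem monomialIdeal_finset_sup {ι : Type*} (s : Finset ι) (f : ι → UpperSet (σ →₀ ℕ)) :
    monomialIdeal R (s.sup f) = ⨅ i ∈ s, monomialIdeal R (f i) := by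
  classical
  induction s using Finset.induction_on with
  | empty => simp [monomialIdeal_bot]
  | insert i s _ ih => rw [Finset.sup_insert, monomialIdeal_sup, ih, Finset.iInf_insert]

theorem span_X_pow_eq_monomialIdeal (T : Finset σ) (e : σ → ℕ) :
    Ideal.span {p : MvPolynomial σ R | ∃ i ∈ T, p = X i ^ e i}
      = monomialIdeal R (upperClosure ((fun i => Finsupp.single i (e i)) '' T)) := by
  rw [monomialIdeal_upperClosure, Set.image_image]
  congr 1
  ext p
  simp [X_pow_eq_monomial, eq_comm]

theorem biInf_image_monomialIdeal [DecidableEq (Ideal (MvPolynomial σ R))]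
    (t : Finset (UpperSet (σ →₀ ℕ))) :
    ⨅ Q ∈ t.image (monomialIdeal R), Q = monomialIdeal R (t.sup id) := by
  rw [Finset.iInf_finset_image, monomialIdeal_finset_sup]
  rfl

variable [Nontrivial R]

theorem monomial_mem_monomialIdeal {U : UpperSet (σ →₀ ℕ)} {a : σ →₀ ℕ} :
    monomial a (1 : R) ∈ monomialIdeal R U ↔ a ∈ U := by
  classical
  simp [mem_monomialIdeal, support_monomial]

theorem monomialIdeal_le_monomialIdeal {U V : UpperSet (σ →₀ ℕ)} :
    monomialIdeal R U ≤ monomialIdeal R V ↔ V ≤ U := by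
  refine ⟨fun h => UpperSet.coe_subset_coe.1 fun a ha => ?_, fun h p hp => ?_⟩
  · exact monomial_mem_monomialIdeal.1 (h (monomial_mem_monomialIdeal.2 ha))
  · exact mem_monomialIdeal.2 fun m hm =>
      UpperSet.coe_subset_coe.2 h (mem_monomialIdeal.1 hp m hm)

theorem monomialIdeal_injective : Function.Injective (monomialIdeal R (σ := σ)) :=
  fun _ _ h =>
    le_antisymm (monomialIdeal_le_monomialIdeal.1 h.ge) (monomialIdeal_le_monomialIdeal.1 h.le)

end MvPolynomial

section IrreducibleDecomposition

variable {n : ℕ} {K : Type*} [Field K]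

theorem IsMonomialIdeal.exists_eq_monomialIdeal {I : Ideal (MvPolynomial (Fin n) K)}
    (hI : IsMonomialIdeal I) : ∃ U, monomialIdeal K U = I :=
  let ⟨B, hB⟩ := hI
  ⟨upperClosure B, (monomialIdeal_upperClosure B).trans hB.symm⟩

theorem isIrreducibleMonomialIdeal_iff {Q : Ideal (MvPolynomial (Fin n) K)} :
    IsIrreducibleMonomialIdeal Q ↔ ∃ U, SupIrred U ∧ monomialIdeal K U = Q := by
  simp_rw [← supPrime_iff_supIrred]
  constructor
  · rintro ⟨T, e, he, rfl⟩
    exact ⟨_, supPrime_upperClosure_image_single fun i hi => Nat.one_le_iff_ne_zero.1 (he i hi),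
      (span_X_pow_eq_monomialIdeal T e).symm⟩
  · rintro ⟨U, hU, rfl⟩
    obtain ⟨T, e, he, rfl⟩ := hU.exists_eq_upperClosure_image_single
    classical
    exact ⟨T.toFinset, e, fun i hi => Nat.one_le_iff_ne_zero.2 (he i (Set.mem_toFinset.1 hi)),
      by rw [span_X_pow_eq_monomialIdeal, Set.coe_toFinset]⟩

theorem isIrreducibleMonomialIdeal_monomialIdeal_iff {U : UpperSet (Fin n →₀ ℕ)} :
    IsIrreducibleMonomialIdeal (monomialIdeal K U) ↔ SupIrred U :=
  isIrreducibleMonomialIdeal_iff.trans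
    ⟨fun ⟨_, hV, hVU⟩ => monomialIdeal_injective hVU ▸ hV, fun hU => ⟨U, hU, rfl⟩⟩

theorem isIrredundantSupIrredDecomposition_iff_image [DecidableEq (UpperSet (Fin n →₀ ℕ))]
    [DecidableEq (Ideal (MvPolynomial (Fin n) K))] (U : UpperSet (Fin n →₀ ℕ))
    (t : Finset (UpperSet (Fin n →₀ ℕ))) :
    IsIrredundantSupIrredDecomposition U t ↔
      (∀ Q ∈ t.image (monomialIdeal K), IsIrreducibleMonomialIdeal Q) ∧
      (monomialIdeal K U = ⨅ Q ∈ t.image (monomialIdeal K), Q) ∧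
      ∀ Q ∈ t.image (monomialIdeal K),
        (⨅ R ∈ ((t.image (monomialIdeal K) : Set (Ideal (MvPolynomial (Fin n) K))) \ {Q}), R)
          ≠ monomialIdeal K U := by
  simp only [IsIrredundantSupIrredDecomposition, Finset.forall_mem_image,
    isIrreducibleMonomialIdeal_monomialIdeal_iff, biInf_image_monomialIdeal, ← Finset.coe_erase,
    ← Finset.image_erase monomialIdeal_injective, Finset.iInf_coe,
    ne_eq, monomialIdeal_injective.eq_iff, eq_comm (a := U)]

end IrreducibleDecomposition

/-- Every monomial ideal has a unique irredundant decomposition as a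
finite intersection of irreducible monomial ideals. -/
theorem unique_irreducible_decomposition {n : ℕ} {K : Type*} [Field K]
    (I : Ideal (MvPolynomial (Fin n) K)) (hI : IsMonomialIdeal I) :
    ∃! 𝒬 : Finset (Ideal (MvPolynomial (Fin n) K)),
      (∀ Q ∈ 𝒬, IsIrreducibleMonomialIdeal Q) ∧
      (I = ⨅ Q ∈ 𝒬, Q) ∧
      ∀ Q ∈ 𝒬, (⨅ R ∈ ((𝒬 : Set (Ideal (MvPolynomial (Fin n) K))) \ {Q}), R) ≠ I := by
  classical
  obtain ⟨U, rfl⟩ := hI.exists_eq_monomialIdeal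
  obtain ⟨s, hs, hs_unique⟩ := existsUnique_isIrredundantSupIrredDecomposition U
  refine ⟨s.image (monomialIdeal K),
    (isIrredundantSupIrredDecomposition_iff_image U s).1 hs, fun 𝒬 h𝒬 => ?_⟩
  obtain ⟨t, -, rfl⟩ := (Finset.subset_set_image_iff (s := Set.univ)).1 fun Q hQ =>
    let ⟨V, _, hV⟩ := isIrreducibleMonomialIdeal_iff.1 (h𝒬.1 Q hQ)
    ⟨V, trivial, hV⟩
  rw [hs_unique t ((isIrredundantSupIrredDecomposition_iff_image U t).2 h𝒬)]
end

section
/- Let G be a simple hypergraph on V = {x_1, ..., x_n} all of whose edges have cardinality at least 2, with edge ideal I = I(G) ⊆ S = K[x_1, ..., x_n], and let k ≥ 1. Let Y_i = {y_{i,1}, ..., y_{i,n}} for i = 1, ..., k be disjoint copies of the variables, let I(Y_i) be the edge ideal of G written in the variables Y_i, set Ĩ = I(Y_1) + ... + I(Y_k) ⊆ T_k = K[Y_1, ..., Y_k], and let φ_k : S → T_k be the K-algebra homomorphism sending x_j to y_{1,j} + ... + y_{k,j}. Then G is k-colorable if and only if φ_k(x_1 x_2 ⋯ x_n) ∉ Ĩ.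 -/
open MvPolynomial

/-- A simple hypergraph on vertex set `Fin n`: a set of nonempty edges,
no edge containing another. -/
structure SimpleHypergraph (n : ℕ) where
  edges : Finset (Finset (Fin n))
  nonempty_of_mem : ∀ e ∈ edges, e.Nonempty
  simple : ∀ e ∈ edges, ∀ f ∈ edges, e ⊆ f → e = f

/-- `G` is `k`-colorable: there is an assignment of `k` colors to the vertices such that
every edge (of cardinality at least two) contains two vertices of different colors. -/
def Colorable {n : ℕ} (G : SimpleHypergraph n) (k : ℕ) : Prop :=
  ∃ c : Fin n → Fin k, ∀ e ∈ G.edges, 2 ≤ e.card → ∃ u ∈ e, ∃ v ∈ e, c u ≠ c v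

/-- The ideal `Ĩ = I(Y_1) + ⋯ + I(Y_k)` in `T_k = K[Y_1, …, Y_k]`, where `I(Y_i)` is the
edge ideal of `G` written in the `i`-th copy `Y_i` of the variables.  Here the variable
`y_{i,j}` is encoded as `X (i, j)`. -/
noncomputable def coloredEdgeIdeal {n : ℕ} (K : Type*) [Field K] (G : SimpleHypergraph n)
    (k : ℕ) : Ideal (MvPolynomial (Fin k × Fin n) K) :=
  Ideal.span {m | ∃ i : Fin k, ∃ e ∈ G.edges, m = ∏ j ∈ e, X (i, j)}

/-- The homomorphism `φ_k : S → T_k` sending `x_j` to `y_{1,j} + ⋯ + y_{k,j}`. -/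
noncomputable def phi {n : ℕ} (K : Type*) [Field K] (k : ℕ) :
    MvPolynomial (Fin n) K →ₐ[K] MvPolynomial (Fin k × Fin n) K :=
  aeval fun j : Fin n => ∑ i : Fin k, X (i, j)

/-!
Expanding the product, `φ_k(x_1 ⋯ x_n) = ∑_c ∏_j y_{c(j),j}` is the sum of the squarefree
monomials indexed by the colorings `c : V → [k]`, all distinct and with coefficient `1`. Since
`Ĩ` is a monomial ideal, the sum lies in `Ĩ` iff each of these monomials does, i.e. iff each
`∏_j y_{c(j),j}` is divisible by some `∏_{j ∈ e} y_{i,j}`, which says that the edge `e` is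
monochromatic of color `i` under `c`. So `φ_k(x_1 ⋯ x_n) ∉ Ĩ` iff some coloring has no
monochromatic edge.
-/

section SquarefreeMonomial

variable {σ : Type*} [DecidableEq σ]

theorem Finset.toFinsupp_val_le_toFinsupp_val_iff {s t : Finset σ} :
    Multiset.toFinsupp s.val ≤ Multiset.toFinsupp t.val ↔ s ⊆ t := by
  rw [← Finset.val_le_iff, ← Finsupp.orderIsoMultiset.le_iff_le]
  simp [Finsupp.orderIsoMultiset]

theorem Finset.toFinsupp_val_injective :
    Function.Injective fun s : Finset σ => Multiset.toFinsupp s.val :=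
  Multiset.toFinsupp.injective.comp Finset.val_injective

theorem MvPolynomial.prod_X_eq_monomial_toFinsupp {R : Type*} [CommSemiring R] (s : Finset σ) :
    ∏ a ∈ s, (X a : MvPolynomial σ R) = monomial (Multiset.toFinsupp s.val) 1 := by
  rw [← prod_X_pow_eq_monomial, Multiset.toFinsupp_support, Finset.val_toFinset]
  refine Finset.prod_congr rfl fun a ha => ?_
  rw [Multiset.toFinsupp_apply, Multiset.count_eq_one_of_mem s.nodup ha, pow_one]

theorem MvPolynomial.support_sum_monomial_one {ι R : Type*} [CommSemiring R] [Nontrivial R]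
    {f : ι → σ →₀ ℕ} (hf : Function.Injective f) (s : Finset ι) :
    (∑ i ∈ s, monomial (f i) (1 : R)).support = s.image f := by
  ext m
  simp only [mem_support_iff, coeff_sum, coeff_monomial, Finset.mem_image]
  constructor
  · intro hm
    by_contra! hne
    exact hm (Finset.sum_eq_zero fun i hi => if_neg (hne i hi))
  · rintro ⟨i, hi, rfl⟩
    rw [Finset.sum_eq_single_of_mem i hi fun j _ hj => if_neg (hf.ne hj), if_pos rfl]
    exact one_ne_zero

end SquarefreeMonomial

section Coloring

variable {n k : ℕ}

/-- The set of variables `y_{c(j),j}`, whose product is the monomial of the coloring `c`. -/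
def coloringGraph (c : Fin n → Fin k) : Finset (Fin k × Fin n) :=
  Finset.univ.image fun j => (c j, j)

@[simp]
theorem mem_coloringGraph {c : Fin n → Fin k} {i : Fin k} {j : Fin n} :
    (i, j) ∈ coloringGraph c ↔ c j = i := by
  simp [coloringGraph, Prod.ext_iff]

theorem coloringGraph_injective : Function.Injective (coloringGraph (n := n) (k := k)) :=
  fun _ _ h => funext fun _ => mem_coloringGraph.mp (h ▸ mem_coloringGraph.mpr rfl)

theorem singleton_product_subset_coloringGraph_iff (c : Fin n → Fin k) (i : Fin k)
    (e : Finset (Fin n)) : {i} ×ˢ e ⊆ coloringGraph c ↔ ∀ j ∈ e, c j = i := by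
  simp [Finset.subset_iff]

variable (K : Type*) [Field K]

theorem phi_prod_X :
    phi K k (∏ j : Fin n, (X j : MvPolynomial (Fin n) K)) =
      ∑ c : Fin n → Fin k, monomial (Multiset.toFinsupp (coloringGraph c).val) 1 := by
  simp only [map_prod, phi, aeval_X, Finset.prod_univ_sum, Fintype.piFinset_univ]
  refine Finset.sum_congr rfl fun c _ => ?_
  rw [← prod_X_eq_monomial_toFinsupp, coloringGraph,
    Finset.prod_image fun j _ j' _ h => (Prod.ext_iff.mp h).2]

theorem prod_X_eq_monomial_singleton_product (i : Fin k) (e : Finset (Fin n)) :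
    ∏ j ∈ e, (X (i, j) : MvPolynomial (Fin k × Fin n) K) =
      monomial (Multiset.toFinsupp ({i} ×ˢ e).val) 1 := by
  rw [← prod_X_eq_monomial_toFinsupp, Finset.singleton_product, Finset.prod_map]
  rfl

theorem coloredEdgeIdeal_eq_span_monomial (G : SimpleHypergraph n) :
    coloredEdgeIdeal K G k = Ideal.span ((fun s => monomial s (1 : K)) ''
      {s | ∃ e ∈ G.edges, ∃ i : Fin k, s = Multiset.toFinsupp ({i} ×ˢ e).val}) := by
  rw [coloredEdgeIdeal]
  congr 1
  ext m
  constructor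
  · rintro ⟨i, e, he, rfl⟩
    exact ⟨_, ⟨e, he, i, rfl⟩, (prod_X_eq_monomial_singleton_product K i e).symm⟩
  · rintro ⟨_, ⟨e, he, i, rfl⟩, rfl⟩
    exact ⟨i, e, he, (prod_X_eq_monomial_singleton_product K i e).symm⟩

theorem phi_prod_X_mem_coloredEdgeIdeal_iff (G : SimpleHypergraph n) :
    phi K k (∏ j : Fin n, (X j : MvPolynomial (Fin n) K)) ∈ coloredEdgeIdeal K G k ↔
      ∀ c : Fin n → Fin k, ∃ e ∈ G.edges, ∃ i, ∀ j ∈ e, c j = i := by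
  rw [phi_prod_X, coloredEdgeIdeal_eq_span_monomial, mem_ideal_span_monomial_image,
    support_sum_monomial_one (f := fun c => Multiset.toFinsupp (coloringGraph c).val)
      (Finset.toFinsupp_val_injective.comp coloringGraph_injective)]
  simp only [Finset.mem_image, Finset.mem_univ, true_and, Set.mem_ofPred_eq, ↓existsAndEq,
    and_true, exists_and_left, forall_exists_index, forall_apply_eq_imp_iff,
    Finset.toFinsupp_val_le_toFinsupp_val_iff, singleton_product_subset_coloringGraph_iff]

end Coloring

theorem Finset.exists_ne_iff_forall_exists_ne {α β : Type*} {s : Finset α} (hs : s.Nonempty)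
    (f : α → β) : (∃ u ∈ s, ∃ v ∈ s, f u ≠ f v) ↔ ∀ b, ∃ a ∈ s, f a ≠ b := by
  obtain ⟨w, hw⟩ := hs
  constructor
  · rintro ⟨u, hu, v, hv, huv⟩ b
    by_cases hub : f u = b
    · exact ⟨v, hv, hub ▸ huv.symm⟩
    · exact ⟨u, hu, hub⟩
  · intro h
    obtain ⟨u, hu, hne⟩ := h (f w)
    exact ⟨u, hu, w, hw, hne⟩

theorem colorable_iff_phi_not_mem_general {n : ℕ} (K : Type*) [Field K] (G : SimpleHypergraph n)
    (hcard : ∀ e ∈ G.edges, 2 ≤ e.card) (k : ℕ) :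
    Colorable G k ↔ phi K k (∏ j : Fin n, (X j : MvPolynomial (Fin n) K)) ∉
      coloredEdgeIdeal K G k := by
  rw [phi_prod_X_mem_coloredEdgeIdeal_iff, Colorable]
  push Not
  refine exists_congr fun c => forall₂_congr fun e he => ?_
  rw [← Finset.exists_ne_iff_forall_exists_ne (G.nonempty_of_mem e he)]
  exact ⟨fun h => h (hcard e he), fun h _ => h⟩

/-- Let `G` be a simple hypergraph all of whose edges have cardinality
at least `2`, and let `k ≥ 1`.  Then `G` is `k`-colorable if and only if
`φ_k(x_1 ⋯ x_n) ∉ Ĩ`. -/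
theorem colorable_iff_phi_not_mem {n : ℕ} (K : Type*) [Field K] (G : SimpleHypergraph n)
    (hcard : ∀ e ∈ G.edges, 2 ≤ e.card) (k : ℕ) (hk : 1 ≤ k) :
    Colorable G k ↔ phi K k (∏ j : Fin n, (X j : MvPolynomial (Fin n) K)) ∉
      coloredEdgeIdeal K G k :=
  colorable_iff_phi_not_mem_general K G hcard k
end

section
/- Let G be a simple hypergraph on V = {x_1, ..., x_n} all of whose edges have cardinality at least 2, with edge ideal I(G) ⊆ S = K[x_1, ..., x_n], and let m = x_1 x_2 ⋯ x_n. Then for every k ≥ 1, G is k-colorable if and only if m ∉ I(G)^{k}, the k-th secant power of I(G). In particular, the chromatic number satisfies χ(G) = min{ k : m ∉ I(G)^{k} }. -/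
/-!
Substituting `x_j ↦ y_{1,j} + ⋯ + y_{k,j}` identifies `I^{k}` with the preimage of
`I(Y_1) + ⋯ + I(Y_k)`: the substitution kills the linear generators `x_j - ∑ᵢ y_{i,j}`, and modulo
them every polynomial agrees with its image. So `m ∈ I(G)^{k}` iff
`∏_j (y_{1,j} + ⋯ + y_{k,j}) = ∑_c ∏_j y_{c(j),j}` lies in `I(Y_1) + ⋯ + I(Y_k)`, the sum running
over all maps `c : V → [k]`. If `c` is not a colouring, some edge `e` is monochromatic of colour `i`,
and `∏_{j ∈ e} y_{i,j} ∈ I(Y_i)` divides the `c`-term. If `c` is a colouring, the specialization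
`y_{i,j} ↦ x_j` for `c(j) = i` and `y_{i,j} ↦ 0` otherwise kills every `I(Y_i)` (each edge has a
vertex not coloured `i`) and is left inverse to the substitution, so it would send `m` to `0`.
-/

open MvPolynomial

/-- The edge ideal of `G`. -/
noncomputable def edgeIdeal {n : ℕ} (K : Type*) [Field K] (G : SimpleHypergraph n) :
    Ideal (MvPolynomial (Fin n) K) :=
  Ideal.span {m | ∃ e ∈ G.edges, m = ∏ i ∈ e, X i}

/-- The `k`-th secant power `I^{k}` of an ideal `I ⊆ S = K[x_1, …, x_n]`:
working in `T = K[V, Y_1, …, Y_k]` (with `y_{i,j}` encoded as `X (Sum.inr (i, j))` and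
`x_j` as `X (Sum.inl j)`), it is the contraction to `S` of
`I(Y_1) + ⋯ + I(Y_k) + ({x_j − (y_{1,j} + ⋯ + y_{k,j})})`. -/
noncomputable def secantPower {n : ℕ} {K : Type*} [Field K]
    (I : Ideal (MvPolynomial (Fin n) K)) (k : ℕ) : Ideal (MvPolynomial (Fin n) K) :=
  Ideal.comap (rename (Sum.inl : Fin n → Fin n ⊕ (Fin k × Fin n)))
    ((⨆ i : Fin k, Ideal.map (rename fun j : Fin n => (Sum.inr (i, j) : Fin n ⊕ (Fin k × Fin n))) I)
      ⊔ Ideal.span {p | ∃ j : Fin n,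
          p = X (Sum.inl j) - ∑ i : Fin k, X (Sum.inr (i, j) : Fin n ⊕ (Fin k × Fin n))})

namespace MvPolynomial

variable {σ R A : Type*} [CommSemiring R] [CommRing A] [Algebra R A]

theorem sub_mem_of_forall_X_sub_mem {f g : MvPolynomial σ R →ₐ[R] A} {P : Ideal A}
    (h : ∀ i, f (X i) - g (X i) ∈ P) (p : MvPolynomial σ R) : f p - g p ∈ P := by
  rw [← Ideal.Quotient.eq, ← Ideal.Quotient.mkₐ_eq_mk R, ← AlgHom.comp_apply, ← AlgHom.comp_apply]
  congr 1
  refine algHom_ext fun i => ?_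
  simpa only [AlgHom.comp_apply, Ideal.Quotient.mkₐ_eq_mk, Ideal.Quotient.eq] using h i

end MvPolynomial

section SecantPower

/-- `x_j ↦ y_{1,j} + ⋯ + y_{k,j}`, where `y_{i,j}` is `X (i, j)`. -/
noncomputable def diagonalSum (n k : ℕ) (R : Type*) [CommSemiring R] :
    MvPolynomial (Fin n) R →ₐ[R] MvPolynomial (Fin k × Fin n) R :=
  aeval fun j => ∑ i, X (i, j)

/-- `I(Y_1) + ⋯ + I(Y_k)`. -/
noncomputable def sumCopies {n : ℕ} {R : Type*} [CommSemiring R]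
    (I : Ideal (MvPolynomial (Fin n) R)) (k : ℕ) : Ideal (MvPolynomial (Fin k × Fin n) R) :=
  ⨆ i : Fin k, I.map (rename fun j => (i, j))

variable {n : ℕ} {K : Type*} [Field K] (I : Ideal (MvPolynomial (Fin n) K)) (k : ℕ)

theorem secantPower_le_comap_diagonalSum :
    secantPower I k ≤ (sumCopies I k).comap (diagonalSum n k K) := by
  let π : MvPolynomial (Fin n ⊕ (Fin k × Fin n)) K →ₐ[K] MvPolynomial (Fin k × Fin n) K :=
    aeval (Sum.elim (fun j => ∑ i, X (i, j)) X)
  have hπ : π.comp (rename Sum.inl) = diagonalSum n k K :=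
    algHom_ext fun j => by simp [π, diagonalSum]
  rw [← hπ]
  show _ ≤ ((sumCopies I k).comap π).comap (rename Sum.inl)
  refine Ideal.comap_mono (sup_le (iSup_le fun i => ?_) ?_)
  · rw [Ideal.map_le_iff_le_comap]
    intro q hq
    simp only [Ideal.mem_comap, π, aeval_rename]
    rw [show Sum.elim _ X ∘ _ = X ∘ fun j => (i, j) from rfl, ← rename_eq_aeval]
    exact Ideal.mem_iSup_of_mem i (Ideal.mem_map_of_mem _ hq)
  · rw [Ideal.span_le]
    rintro _ ⟨j, rfl⟩
    simp [π]

theorem comap_diagonalSum_le_secantPower :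
    (sumCopies I k).comap (diagonalSum n k K) ≤ secantPower I k := by
  intro p hp
  let ι : MvPolynomial (Fin k × Fin n) K →ₐ[K] MvPolynomial (Fin n ⊕ (Fin k × Fin n)) K :=
    rename Sum.inr
  rw [secantPower, Ideal.mem_comap, ← sub_add_cancel (rename Sum.inl p) (ι (diagonalSum n k K p))]
  have hlin := sub_mem_of_forall_X_sub_mem (f := rename Sum.inl) (g := ι.comp (diagonalSum n k K))
    (P := Ideal.span {q | ∃ j : Fin n,
      q = X (Sum.inl j) - ∑ i : Fin k, X (Sum.inr (i, j) : Fin n ⊕ (Fin k × Fin n))})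
    (fun j => Ideal.subset_span ⟨j, by simp [ι, diagonalSum]⟩) p
  refine add_mem (Ideal.mem_sup_right hlin) (Ideal.mem_sup_left ?_)
  have hcopies := Ideal.mem_map_of_mem ι (Ideal.mem_comap.mp hp)
  rw [sumCopies, Ideal.map_iSup] at hcopies
  simp only [ι, Ideal.map_mapₐ, rename_comp_rename] at hcopies
  exact hcopies

theorem secantPower_eq_comap_diagonalSum :
    secantPower I k = (sumCopies I k).comap (diagonalSum n k K) :=
  le_antisymm (secantPower_le_comap_diagonalSum I k) (comap_diagonalSum_le_secantPower I k)

end SecantPower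

noncomputable def colorSpecialization {n k : ℕ} {R : Type*} [CommSemiring R] (c : Fin n → Fin k) :
    MvPolynomial (Fin k × Fin n) R →ₐ[R] MvPolynomial (Fin n) R :=
  aeval fun ij => if c ij.2 = ij.1 then X ij.2 else 0

theorem colorSpecialization_comp_diagonalSum {n k : ℕ} {R : Type*} [CommSemiring R]
    (c : Fin n → Fin k) : (colorSpecialization c).comp (diagonalSum n k R) = AlgHom.id R _ :=
  algHom_ext fun j => by simp [colorSpecialization, diagonalSum, Finset.sum_ite_eq]

section EdgeIdeal

variable {n k : ℕ} {K : Type*} [Field K] {G : SimpleHypergraph n}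

theorem prod_X_mem_sumCopies_edgeIdeal {e : Finset (Fin n)} (he : e ∈ G.edges) (i : Fin k) :
    ∏ j ∈ e, (X (i, j) : MvPolynomial (Fin k × Fin n) K) ∈ sumCopies (edgeIdeal K G) k := by
  refine Ideal.mem_iSup_of_mem i ?_
  rw [show ∏ j ∈ e, X (i, j) = rename (fun j => (i, j)) (∏ j ∈ e, (X j : MvPolynomial _ K)) by
    simp only [map_prod, rename_X]]
  exact Ideal.mem_map_of_mem _ (Ideal.subset_span ⟨e, he, rfl⟩)

theorem diagonalSum_prod_X_mem_sumCopies_of_not_colorable (h : ¬ Colorable G k) :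
    diagonalSum n k K (∏ j, X j) ∈ sumCopies (edgeIdeal K G) k := by
  unfold Colorable at h
  push Not at h
  simp only [map_prod, diagonalSum, aeval_X]
  rw [Finset.prod_univ_sum]
  refine Ideal.sum_mem _ fun c _ => ?_
  obtain ⟨e, he, -, hmono⟩ := h c
  obtain ⟨u, hu⟩ := G.nonempty_of_mem e he
  rw [← Finset.prod_mul_prod_compl e]
  refine Ideal.mul_mem_right _ _ ?_
  rw [Finset.prod_congr rfl fun j hj => by rw [hmono j hj u hu]]
  exact prod_X_mem_sumCopies_edgeIdeal he (c u)

theorem sumCopies_edgeIdeal_le_ker_colorSpecialization {c : Fin n → Fin k}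
    (hc : ∀ e ∈ G.edges, ∀ i, ∃ j ∈ e, c j ≠ i) :
    sumCopies (edgeIdeal K G) k ≤ RingHom.ker (colorSpecialization (R := K) c) := by
  refine iSup_le fun i => ?_
  rw [Ideal.map_le_iff_le_comap, edgeIdeal, Ideal.span_le]
  rintro _ ⟨e, he, rfl⟩
  obtain ⟨j, hj, hji⟩ := hc e he i
  simp only [SetLike.mem_coe, Ideal.mem_comap, RingHom.mem_ker, map_prod]
  exact Finset.prod_eq_zero hj (by simp [colorSpecialization, hji])

theorem prod_X_not_mem_secantPower_of_colorable (hcard : ∀ e ∈ G.edges, 2 ≤ e.card)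
    (h : Colorable G k) : ∏ j, X j ∉ secantPower (edgeIdeal K G) k := by
  obtain ⟨c, hc⟩ := h
  have hmiss : ∀ e ∈ G.edges, ∀ i, ∃ j ∈ e, c j ≠ i := fun e he i => by
    obtain ⟨u, hu, v, hv, huv⟩ := hc e he (hcard e he)
    by_cases hui : c u = i
    · exact ⟨v, hv, fun hvi => huv (hui.trans hvi.symm)⟩
    · exact ⟨u, hu, hui⟩
  rw [secantPower_eq_comap_diagonalSum, Ideal.mem_comap]
  intro hmem
  have hzero := sumCopies_edgeIdeal_le_ker_colorSpecialization hmiss hmem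
  rw [RingHom.mem_ker, ← AlgHom.comp_apply, colorSpecialization_comp_diagonalSum,
    AlgHom.id_apply] at hzero
  exact Finset.prod_ne_zero_iff.mpr (fun j _ => X_ne_zero j) hzero

theorem colorable_iff_prod_X_not_mem_secantPower (hcard : ∀ e ∈ G.edges, 2 ≤ e.card) (k : ℕ) :
    Colorable G k ↔ ∏ j, X j ∉ secantPower (edgeIdeal K G) k := by
  refine ⟨prod_X_not_mem_secantPower_of_colorable hcard, fun h => by_contra fun hcol => h ?_⟩
  rw [secantPower_eq_comap_diagonalSum, Ideal.mem_comap]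
  exact diagonalSum_prod_X_mem_sumCopies_of_not_colorable hcol

end EdgeIdeal

theorem colorable_iff_not_mem_secant_general {n : ℕ} (K : Type*) [Field K]
    (G : SimpleHypergraph n) (hcard : ∀ e ∈ G.edges, 2 ≤ e.card) :
    (∀ k : ℕ, 1 ≤ k →
      (Colorable G k ↔
        (∏ j : Fin n, (X j : MvPolynomial (Fin n) K)) ∉ secantPower (edgeIdeal K G) k)) ∧
    sInf {k : ℕ | Colorable G k} =
      sInf {k : ℕ | (∏ j : Fin n, (X j : MvPolynomial (Fin n) K)) ∉
        secantPower (edgeIdeal K G) k} := by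
  have key := colorable_iff_prod_X_not_mem_secantPower (K := K) hcard
  exact ⟨fun k _ => key k, congrArg sInf (Set.ext key)⟩

/-- Let `G` be a simple hypergraph (`n ≥ 1`) all of whose edges have
cardinality at least `2`, with edge ideal `I(G)`, and let `m = x_1 ⋯ x_n`.  For every
`k ≥ 1`, `G` is `k`-colorable iff `m ∉ I(G)^{k}`; in particular the chromatic number
`χ(G) = min {k : G is k-colorable}` equals `min {k : m ∉ I(G)^{k}}`. -/
theorem colorable_iff_not_mem_secant {n : ℕ} (K : Type*) [Field K] (hn : 1 ≤ n)
    (G : SimpleHypergraph n) (hcard : ∀ e ∈ G.edges, 2 ≤ e.card) :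
    (∀ k : ℕ, 1 ≤ k →
      (Colorable G k ↔
        (∏ j : Fin n, (X j : MvPolynomial (Fin n) K)) ∉ secantPower (edgeIdeal K G) k)) ∧
    sInf {k : ℕ | Colorable G k} =
      sInf {k : ℕ | (∏ j : Fin n, (X j : MvPolynomial (Fin n) K)) ∉
        secantPower (edgeIdeal K G) k} :=
  colorable_iff_not_mem_secant_general K G hcard
end

section
/- Let G be the odd cycle on the vertices x_1, ..., x_{2ℓ−1} (with edges x_i x_{i+1}, indices mod 2ℓ−1), and let J = J(G) be its cover ideal in S = K[x_1, ..., x_{2ℓ−1}]. Then J^2 has the primary decomposition J^2 = [⋂_{i=1}^{2ℓ−1} (x_i, x_{i+1})^2] ∩ (x_1^2, ..., x_{2ℓ−1}^2), where indices are taken modulo 2ℓ−1. -/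
/-! All three ideals are monomial ideals, so the equality reduces to a statement about an
exponent vector `d`: it dominates the sum of the indicator vectors of two vertex covers iff
`d i + d (i + 1) ≥ 2` on every edge and `d j ≥ 2` at some vertex. A vertex cover of the
`(2ℓ-1)`-cycle has at least `ℓ` vertices, so two covers share a vertex `j`. Conversely, given a
vertex `k` with `d k ≥ 2`, put the vertices with `d i ≥ 2` into both covers and distribute those
with `d i = 1` according to the parity of `(i - k).val`; the edge condition forces such vertices
to come in runs avoiding `k`, along which this parity alternates. -/

open MvPolynomial Finset Pointwise

/-- The cover ideal of the odd cycle on the vertices `ZMod (2ℓ-1)` (whose edges are the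
pairs `{i, i+1}`, indices modulo `2ℓ-1`): it is generated by the squarefree monomials
corresponding to the vertex covers, i.e. the sets `w` meeting every edge. -/
noncomputable def cycleCoverIdeal (K : Type*) [Field K] (ℓ : ℕ) :
    Ideal (MvPolynomial (ZMod (2 * ℓ - 1)) K) :=
  Ideal.span {m | ∃ w : Finset (ZMod (2 * ℓ - 1)),
    (∀ i : ZMod (2 * ℓ - 1), i ∈ w ∨ i + 1 ∈ w) ∧ m = ∏ i ∈ w, X i}

theorem ZMod.val_add_one_of_add_one_ne_zero {n : ℕ} [NeZero n] {a : ZMod n} (h : a + 1 ≠ 0) :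
    (a + 1).val = a.val + 1 := by
  obtain ⟨n, rfl⟩ := Nat.exists_eq_add_one_of_ne_zero (NeZero.ne n)
  exact Fin.val_add_one_of_lt <| Fin.lt_last_iff_ne_last.mpr fun hl => h (hl ▸ Fin.last_add_one n)

theorem Finsupp.single_add_single_le_iff {σ : Type*} {i j : σ} (hij : i ≠ j) {d : σ →₀ ℕ} :
    single i 1 + single j 1 ≤ d ↔ 1 ≤ d i ∧ 1 ≤ d j := by
  classical
  simp only [Finsupp.le_def, Finsupp.add_apply, Finsupp.single_apply]
  refine ⟨fun h => ⟨by simpa [hij.symm] using h i, by simpa [hij] using h j⟩, fun h x => ?_⟩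
  split_ifs with hi hj <;> subst_vars <;> first | omega | exact absurd rfl hij

namespace MvPolynomial

variable {σ R : Type*} [CommSemiring R]

theorem prod_X_eq_monomial_indicator (w : Finset σ) :
    ∏ i ∈ w, (X i : MvPolynomial σ R) = monomial (Finsupp.indicator w fun _ _ => 1) 1 := by
  simpa using prod_X_pow (R := R) (fun _ => 1) w

theorem span_monomial_image_mul (S T : Set (σ →₀ ℕ)) :
    Ideal.span ((fun s => monomial s (1 : R)) '' S) * Ideal.span ((fun s => monomial s 1) '' T) =
      Ideal.span ((fun s => monomial s 1) '' (S + T)) := by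
  rw [Ideal.span_mul_span', ← Set.image2_mul, ← Set.image2_add, Set.image2_image_left,
    Set.image2_image_right, Set.image_image2]
  simp only [monomial_mul, mul_one]

theorem mem_span_monomial_image_sq_iff {S : Set (σ →₀ ℕ)} {f : MvPolynomial σ R} :
    f ∈ Ideal.span ((fun s => monomial s (1 : R)) '' S) ^ 2 ↔
      ∀ d ∈ f.support, ∃ s ∈ S, ∃ t ∈ S, s + t ≤ d := by
  rw [pow_two, span_monomial_image_mul, mem_ideal_span_monomial_image]
  refine forall₂_congr fun d _ => ⟨?_, ?_⟩
  · rintro ⟨_, ⟨s, hs, t, ht, rfl⟩, hle⟩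
    exact ⟨s, hs, t, ht, hle⟩
  · rintro ⟨s, hs, t, ht, hle⟩
    exact ⟨s + t, Set.add_mem_add hs ht, hle⟩

theorem mem_span_X_sq_iff {f : MvPolynomial σ R} :
    f ∈ Ideal.span {p | ∃ j, p = X j ^ 2} ↔ ∀ d ∈ f.support, ∃ j, 2 ≤ d j := by
  have : {p : MvPolynomial σ R | ∃ j, p = X j ^ 2} =
      (fun s => monomial s 1) '' Set.range (fun j => Finsupp.single j 2) := by
    ext; simp [X_pow_eq_monomial, eq_comm]
  simp [this, mem_ideal_span_monomial_image, Finsupp.single_le_iff]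

theorem mem_span_pair_X_sq_iff {i j : σ} (hij : i ≠ j) {f : MvPolynomial σ R} :
    f ∈ Ideal.span {X i, X j} ^ 2 ↔ ∀ d ∈ f.support, 2 ≤ d i + d j := by
  have : ({X i, X j} : Set (MvPolynomial σ R)) =
      (fun s => monomial s 1) '' {Finsupp.single i 1, Finsupp.single j 1} := by
    simp [Set.image_pair, X]
  rw [this, mem_span_monomial_image_sq_iff]
  refine forall₂_congr fun d _ => ?_
  simp only [Set.mem_insert_iff, Set.mem_singleton_iff, exists_eq_or_imp, exists_eq_left,
    ← Finsupp.single_add, Finsupp.single_le_iff, Finsupp.single_add_single_le_iff hij,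
    Finsupp.single_add_single_le_iff hij.symm]
  omega

theorem mem_span_prod_X_sq_iff (P : Finset σ → Prop) {f : MvPolynomial σ R} :
    f ∈ Ideal.span {m | ∃ w, P w ∧ m = ∏ i ∈ w, X i} ^ 2 ↔
      ∀ d ∈ f.support, ∃ w₁ w₂, P w₁ ∧ P w₂ ∧
        Finsupp.indicator w₁ (fun _ _ => 1) + Finsupp.indicator w₂ (fun _ _ => 1) ≤ d := by
  have : {m : MvPolynomial σ R | ∃ w, P w ∧ m = ∏ i ∈ w, X i} =
      (fun s => monomial s 1) '' ((fun w => Finsupp.indicator w (fun _ _ => 1)) '' {w | P w}) := by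
    ext; simp [prod_X_eq_monomial_indicator, eq_comm]
  simp [this, mem_span_monomial_image_sq_iff]

end MvPolynomial

def IsCycleVertexCover {n : ℕ} (w : Finset (ZMod n)) : Prop := ∀ i, i ∈ w ∨ i + 1 ∈ w

namespace IsCycleVertexCover

variable {n : ℕ} {w w₁ w₂ : Finset (ZMod n)}

theorem one_le_indicator_add (hw : IsCycleVertexCover w) (i : ZMod n) :
    1 ≤ Finsupp.indicator w (fun _ _ => 1) i + Finsupp.indicator w (fun _ _ => 1) (i + 1) := by
  rcases hw i with h | h <;> simp [Finsupp.indicator_apply, h]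

theorem le_two_mul_card [NeZero n] (hw : IsCycleVertexCover w) : n ≤ 2 * #w := by
  have hcompl : #wᶜ ≤ #w :=
    card_le_card_of_injOn (· + 1) (fun i hi => (hw i).resolve_left (mem_compl.mp hi))
      (add_left_injective 1).injOn
  rw [card_compl, ZMod.card] at hcompl
  omega

theorem inter_nonempty (hn : Odd n) (h₁ : IsCycleVertexCover w₁) (h₂ : IsCycleVertexCover w₂) :
    (w₁ ∩ w₂).Nonempty := by
  have : NeZero n := ⟨hn.pos.ne'⟩
  have hunion := card_le_univ (w₁ ∪ w₂)
  rw [ZMod.card] at hunion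
  have := card_union_add_card_inter w₁ w₂
  have := h₁.le_two_mul_card
  have := h₂.le_two_mul_card
  obtain ⟨k, rfl⟩ := hn
  rw [← card_pos]
  omega

end IsCycleVertexCover

theorem exists_cycleVertexCovers_le {n : ℕ} [NeZero n] {d : ZMod n →₀ ℕ}
    (hd : ∀ i, 2 ≤ d i + d (i + 1)) {k : ZMod n} (hk : 2 ≤ d k) :
    ∃ w₁ w₂ : Finset (ZMod n), IsCycleVertexCover w₁ ∧ IsCycleVertexCover w₂ ∧
      Finsupp.indicator w₁ (fun _ _ => 1) + Finsupp.indicator w₂ (fun _ _ => 1) ≤ d := by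
  classical
  let cover (b : Prop) : Finset (ZMod n) := {i | 2 ≤ d i ∨ d i = 1 ∧ (Even (i - k).val ↔ b)}
  have parity_flip (i : ZMod n) (hi : d (i + 1) = 1) :
      (Even (i + 1 - k).val ↔ ¬ Even (i - k).val) := by
    have hik : i - k + 1 ≠ 0 := fun h => by
      rw [sub_add_eq_add_sub, sub_eq_zero] at h
      subst h
      omega
    rw [← sub_add_eq_add_sub, ZMod.val_add_one_of_add_one_ne_zero hik, Nat.even_add_one]
  have is_cover (b : Prop) : IsCycleVertexCover (cover b) := by
    intro i
    simp only [cover, mem_filter, mem_univ, true_and]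
    have := hd i
    by_cases hi : 2 ≤ d i
    · exact .inl (.inl hi)
    by_cases hi' : 2 ≤ d (i + 1)
    · exact .inr (.inl hi')
    have hi1 : d i = 1 := by omega
    have hi1' : d (i + 1) = 1 := by omega
    have := parity_flip i hi1'
    tauto
  refine ⟨cover True, cover False, is_cover _, is_cover _, fun i => ?_⟩
  by_cases he : Even (i - k).val <;>
    simp only [cover, he, Finsupp.add_apply, Finsupp.indicator_apply, mem_filter, mem_univ,
      true_and, iff_true, iff_false, not_true_eq_false, not_false_eq_true, and_true, and_false,
      or_false] <;>
    split_ifs <;> omega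

theorem exists_cycleVertexCovers_le_iff {n : ℕ} (hn : Odd n) (d : ZMod n →₀ ℕ) :
    (∃ w₁ w₂ : Finset (ZMod n), IsCycleVertexCover w₁ ∧ IsCycleVertexCover w₂ ∧
      Finsupp.indicator w₁ (fun _ _ => 1) + Finsupp.indicator w₂ (fun _ _ => 1) ≤ d) ↔
      (∀ i, 2 ≤ d i + d (i + 1)) ∧ ∃ j, 2 ≤ d j := by
  have : NeZero n := ⟨hn.pos.ne'⟩
  constructor
  · rintro ⟨w₁, w₂, h₁, h₂, hle⟩
    refine ⟨fun i => ?_, ?_⟩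
    · have hi := hle i
      have hi' := hle (i + 1)
      simp only [Finsupp.add_apply] at hi hi'
      linarith [h₁.one_le_indicator_add i, h₂.one_le_indicator_add i]
    · obtain ⟨j, hj⟩ := h₁.inter_nonempty hn h₂
      rw [mem_inter] at hj
      exact ⟨j, by simpa [Finsupp.indicator_apply, hj.1, hj.2] using hle j⟩
  · rintro ⟨hd, k, hk⟩
    exact exists_cycleVertexCovers_le hd hk

theorem mem_cycleCoverIdeal_sq_iff {K : Type*} [Field K] {ℓ : ℕ} (hodd : Odd (2 * ℓ - 1))
    {f : MvPolynomial (ZMod (2 * ℓ - 1)) K} :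
    f ∈ cycleCoverIdeal K ℓ ^ 2 ↔
      ∀ d ∈ f.support, (∀ i, 2 ≤ d i + d (i + 1)) ∧ ∃ j, 2 ≤ d j :=
  (mem_span_prod_X_sq_iff IsCycleVertexCover).trans <|
    forall₂_congr fun d _ => exists_cycleVertexCovers_le_iff hodd d

/-- Let `G` be the odd cycle on `x_1, …, x_{2ℓ-1}` with cover ideal
`J = J(G)`.  Then `J² = [⋂_i (x_i, x_{i+1})²] ∩ (x_1², …, x_{2ℓ-1}²)`, indices taken
modulo `2ℓ-1`. -/
theorem odd_cycle_coverIdeal_sq_decomposition (K : Type*) [Field K] (ℓ : ℕ) (hℓ : 2 ≤ ℓ) :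
    cycleCoverIdeal K ℓ ^ 2 =
      (⨅ i : ZMod (2 * ℓ - 1),
        (Ideal.span {(X i : MvPolynomial (ZMod (2 * ℓ - 1)) K), X (i + 1)}) ^ 2) ⊓
      Ideal.span {p | ∃ i : ZMod (2 * ℓ - 1), p = (X i : MvPolynomial (ZMod (2 * ℓ - 1)) K) ^ 2} := by
  have hodd : Odd (2 * ℓ - 1) := ⟨ℓ - 1, by omega⟩
  have : Fact (1 < 2 * ℓ - 1) := ⟨by omega⟩
  ext f
  have mem_edge_sq (i : ZMod (2 * ℓ - 1)) :=
    mem_span_pair_X_sq_iff (R := K) (f := f) (succ_ne_self i).symm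
  simp only [Submodule.mem_inf, Submodule.mem_iInf, mem_cycleCoverIdeal_sq_iff hodd,
    mem_span_X_sq_iff, mem_edge_sq]
  exact ⟨fun h => ⟨fun i d hd => (h d hd).1 i, fun d hd => (h d hd).2⟩,
    fun h d hd => ⟨fun i => h.1 i d hd, h.2 d hd⟩⟩
end
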